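/- arXiv:1303.4569 — 2 statements merged into one kernel-verified Lean document; each statement's English description precedes it below -/
import Mathlib

section
/- Let A be a C*-algebra with triple product {x,y,z} = (x y* z + z y* x)/2. For a, b in A the following are equivalent: (i) {a, b, x} = 0 for all x in A; (ii) a b* = 0 and b* a = 0; (iii) {a, a, b} = 0. -/
/-!
Write `c = a b⋆` and `d = b⋆ a`, so that `{a, b, x} = 0` for all `x` says `c x = -x d` for all `x`.
Taking `x = a` gives `a b⋆ a = 0`, hence `d² = 0`, and taking `x = c⋆` shows that the self-adjoint
element `c c⋆` squares to `d⋆ (c c⋆) d = -d⋆ c⋆ d² = 0`; the C⋆-identity then kills `c` and `d`.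

For `{a, a, b} = 0`, i.e. `p b = -b q` with `p = a a⋆` and `q = a⋆ a`, the positive element `q`
anticommutes with `u = a⋆ b`. Then `q²` commutes with `u`, so does its square root `q`, and
anticommuting plus commuting forces `q u = 0`. From there the C⋆-identity gives `p b = 0`, `b q = 0`
and finally `a b⋆ = 0 = b⋆ a`.
-/

noncomputable def tp {A : Type*} [NonUnitalNormedRing A] [StarRing A] [NormedSpace ℂ A]
    (x y z : A) : A :=
  (2:ℂ)⁻¹ • (x * star y * z + z * star y * x)

section

variable {A : Type*}

theorem tp_eq_zero_iff [NonUnitalNormedRing A] [StarRing A] [NormedSpace ℂ A] (x y z : A) :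
    tp x y z = 0 ↔ x * star y * z = -(z * star y * x) := by
  rw [tp, smul_eq_zero_iff_right (by norm_num), add_eq_zero_iff_eq_neg]

namespace CStarRing

variable [NonUnitalNormedRing A] [StarRing A] [CStarRing A]

theorem eq_zero_of_isSelfAdjoint_of_mul_self_eq_zero {x : A} (hx : IsSelfAdjoint x)
    (h : x * x = 0) : x = 0 :=
  (star_mul_self_eq_zero_iff x).mp (hx.star_eq.symm ▸ h)

theorem eq_zero_of_forall_mul_eq_neg_mul {c d : A} (h : ∀ x, c * x = -(x * d))
    (hd : d * d = 0) : c = 0 ∧ d = 0 := by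
  have hcc : c * star c = -(star d * c) := by
    simpa only [star_mul, star_neg, star_star] using congrArg star (h (star c))
  have hsq : c * star c * (c * star c) = 0 := calc
    c * star c * (c * star c) = -(star d * c) * -(star c * d) := by rw [← hcc, ← h (star c)]
    _ = star d * (c * star c) * d := by noncomm_ring
    _ = -(star d * star c * (d * d)) := by rw [h (star c)]; noncomm_ring
    _ = 0 := by rw [hd, mul_zero, neg_zero]
  have hc : c = 0 := (mul_star_self_eq_zero_iff c).mp
    (eq_zero_of_isSelfAdjoint_of_mul_self_eq_zero (.mul_star_self c) hsq)
  refine ⟨hc, (star_mul_self_eq_zero_iff d).mp ?_⟩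
  simpa [hc] using h (star d)

theorem forall_mul_star_mul_eq_neg_iff [IsAddTorsionFree A] {a b : A} :
    (∀ x, a * star b * x = -(x * star b * a)) ↔ a * star b = 0 ∧ star b * a = 0 := by
  refine ⟨fun h ↦ eq_zero_of_forall_mul_eq_neg_mul (fun x ↦ ?_) ?_, fun ⟨hc, hd⟩ x ↦ ?_⟩
  · rw [h x, mul_assoc x]
  · have haba : a * star b * a = 0 := self_eq_neg.mp (h a)
    rw [mul_assoc, ← mul_assoc a, haba, mul_zero]
  · rw [hc, mul_assoc x, hd, zero_mul, mul_zero, neg_zero]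

end CStarRing

section CStarAlgebra

variable [NonUnitalCStarAlgebra A]

theorem Commute.of_mul_self_left [PartialOrder A] [StarOrderedRing A] {q u : A} (hq : 0 ≤ q)
    (h : Commute (q * q) u) : Commute q u := by
  have hsqrt : Commute (CFC.sqrt (q * q)) u := h.cfcₙ_nnreal NNReal.sqrt
  rwa [CFC.sqrt_mul_self q] at hsqrt

theorem mul_eq_zero_of_mul_eq_neg_mul [PartialOrder A] [StarOrderedRing A] {q u : A}
    (hq : 0 ≤ q) (h : q * u = -(u * q)) : q * u = 0 := by
  have : IsAddTorsionFree A := .of_isTorsionFree ℂ A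
  have hsq : Commute (q * q) u := calc
    q * q * u = q * -(u * q) := by rw [mul_assoc, h]
    _ = -(q * u) * q := by noncomm_ring
    _ = u * (q * q) := by rw [h, neg_neg, mul_assoc]
  rw [← (hsq.of_mul_self_left hq).eq] at h
  exact self_eq_neg.mp h

theorem mul_star_mul_eq_neg_iff {a b : A} :
    a * star a * b = -(b * star a * a) ↔ a * star b = 0 ∧ star b * a = 0 := by
  let _ := CStarAlgebra.spectralOrder A
  have := CStarAlgebra.spectralOrderedRing A
  constructor
  · intro h
    have hqu : star a * a * (star a * b) = 0 := by
      refine mul_eq_zero_of_mul_eq_neg_mul (star_mul_self_nonneg a) ?_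
      calc star a * a * (star a * b) = star a * (a * star a * b) := by noncomm_ring
        _ = -(star a * b * (star a * a)) := by rw [h]; noncomm_ring
    have hpb : a * star a * b = 0 := by
      refine (CStarRing.star_mul_self_eq_zero_iff _).mp ?_
      calc star (a * star a * b) * (a * star a * b)
          = star b * a * (star a * a * (star a * b)) := by
            simp only [star_mul, star_star]; noncomm_ring
        _ = 0 := by rw [hqu, mul_zero]
    have hbq : b * star a * a = 0 := by rw [← neg_eq_zero, ← h, hpb]
    constructor
    · refine (CStarRing.star_mul_self_eq_zero_iff _).mp ?_
      calc star (a * star b) * (a * star b) = b * star a * a * star b := by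
            simp only [star_mul, star_star]; noncomm_ring
        _ = 0 := by rw [hbq, zero_mul]
    · refine (CStarRing.mul_star_self_eq_zero_iff _).mp ?_
      calc star b * a * star (star b * a) = star b * (a * star a * b) := by
            simp only [star_mul, star_star]; noncomm_ring
        _ = 0 := by rw [hpb, mul_zero]
  · rintro ⟨hc, hd⟩
    have hc' : b * star a = 0 := by simpa using congrArg star hc
    have hd' : star a * b = 0 := by simpa using congrArg star hd
    rw [mul_assoc, hd', hc', mul_zero, zero_mul, neg_zero]

end CStarAlgebra

end

theorem stmt12 {A : Type*} [NonUnitalNormedRing A] [StarRing A] [CStarRing A]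
    [NormedSpace ℂ A] [IsScalarTower ℂ A A] [SMulCommClass ℂ A A] [StarModule ℂ A]
    [CompleteSpace A] (a b : A) :
    ((∀ x : A, tp a b x = 0) ↔ (a * star b = 0 ∧ star b * a = 0)) ∧
    ((∀ x : A, tp a b x = 0) ↔ tp a a b = 0) := by
  have : IsAddTorsionFree A := .of_isTorsionFree ℂ A
  have h12 : (∀ x : A, tp a b x = 0) ↔ (a * star b = 0 ∧ star b * a = 0) := by
    simpa only [tp_eq_zero_iff] using CStarRing.forall_mul_star_mul_eq_neg_iff
  let _ : NonUnitalCStarAlgebra A := {}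
  exact ⟨h12, h12.trans (by rw [tp_eq_zero_iff]; exact mul_star_mul_eq_neg_iff.symm)⟩
end

section
/- Let A be a C*-algebra with triple product {x,y,z} = (x y* z + z y* x)/2, let e be a partial isometry in A, and let δ : A → A be a triple derivation. Then P₀(e)(δ(e)) = 0 and P₂(e)(δ(e)) = -Q(e)(δ(e)), where Q(e)x = {e,x,e}, P₂(e) = Q(e)², and P₀(e) = Id - 2L(e,e) + Q(e)² with L(e,e)x = {e,e,x}. -/
theorem mul_mul_mul_mul_eq_neg_of_eq_add_add {R : Type*} [NonUnitalRing R] {e f a b : R}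
    (hef : e * f * e = e) (ha : a = e * f * a + a * f * e + e * b * e) :
    e * f * a * f * e = -(e * b * e) := by
  have hright : ∀ x : R, x * e * f * e = x * e := fun x => by
    rw [mul_assoc x e f, mul_assoc x, hef]
  have hsandwich : e * f * a * f * e = e * f * a * f * e + e * f * a * f * e + e * b * e := by
    conv_lhs => rw [ha]
    simp only [mul_add, add_mul, ← mul_assoc, hef, hright]
  rw [eq_neg_iff_add_eq_zero]
  simpa [add_assoc] using hsandwich.symm

section TripleProduct

variable {A : Type*} [NonUnitalNormedRing A] [StarRing A] [NormedSpace ℂ A]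

theorem tp_comm (x y z : A) : tp x y z = tp z y x := by
  rw [tp, tp, add_comm]

theorem tp_self_left_right (x y : A) : tp x y x = x * star y * x := by
  rw [tp]; module

theorem tp_self_tp_self (e a : A) : tp e (tp e a e) e = e * star e * a * star e * e := by
  simp only [tp_self_left_right, star_mul, star_star, mul_assoc]

theorem tp_self_self_self_of_mul_star_mul_self {e : A} (he : e * star e * e = e) :
    tp e e e = e := by
  rw [tp_self_left_right, he]

variable {δ : A →ₗ[ℂ] A}
  (hδ : ∀ x y z : A, δ (tp x y z) = tp (δ x) y z + tp x (δ y) z + tp x y (δ z))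
  {e : A} (he : e * star e * e = e)
include hδ he

theorem triple_derivation_apply_eq_add_add :
    δ e = tp (δ e) e e + tp e (δ e) e + tp e e (δ e) := by
  simpa only [tp_self_self_self_of_mul_star_mul_self he] using hδ e e e

theorem triple_derivation_apply_sub_two_smul_tp :
    δ e - (2:ℂ) • tp e e (δ e) = tp e (δ e) e := by
  nth_rewrite 1 [triple_derivation_apply_eq_add_add hδ he]
  rw [tp_comm (δ e)]
  module

theorem tp_self_tp_self_triple_derivation_apply :
    tp e (tp e (δ e) e) e = - tp e (δ e) e := by
  have hexpand : δ e = e * star e * δ e + δ e * star e * e + e * star (δ e) * e := by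
    refine (triple_derivation_apply_eq_add_add hδ he).trans ?_
    simp only [tp]
    module
  rw [tp_self_tp_self, tp_self_left_right]
  exact mul_mul_mul_mul_eq_neg_of_eq_add_add he hexpand

end TripleProduct

theorem stmt16_general {A : Type*} [NonUnitalNormedRing A] [StarRing A]
    [NormedSpace ℂ A] (δ : A →ₗ[ℂ] A) (hδ : ∀ x y z : A, δ (tp x y z) = tp (δ x) y z + tp x (δ y) z + tp x y (δ z))
    (e : A) (he : e * star e * e = e) :
    (δ e - (2:ℂ) • tp e e (δ e) + tp e (tp e (δ e) e) e = 0) ∧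
    (tp e (tp e (δ e) e) e = - tp e (δ e) e) := by
  have hQ := tp_self_tp_self_triple_derivation_apply hδ he
  refine ⟨?_, hQ⟩
  rw [triple_derivation_apply_sub_two_smul_tp hδ he, hQ, add_neg_cancel]

theorem stmt16 {A : Type*} [NonUnitalNormedRing A] [StarRing A] [CStarRing A]
    [NormedSpace ℂ A] [IsScalarTower ℂ A A] [SMulCommClass ℂ A A] [StarModule ℂ A]
    [CompleteSpace A] (δ : A →ₗ[ℂ] A) (hδ : ∀ x y z : A, δ (tp x y z) = tp (δ x) y z + tp x (δ y) z + tp x y (δ z))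
    (e : A) (he : e * star e * e = e) :
    (δ e - (2:ℂ) • tp e e (δ e) + tp e (tp e (δ e) e) e = 0) ∧
    (tp e (tp e (δ e) e) e = - tp e (δ e) e) :=
  stmt16_general δ hδ e he
end
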